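/- arXiv:1209.6087 — 10 statements merged into one kernel-verified Lean document; each statement's English description precedes it below -/
import Mathlib

section
/- Suppose a² < 4q. Then for every positive integer X, M(X)/q^{X/2} = 2·√((q + 1 - a)/(4q - a²))·cos(ω + X·θ), where θ = arccos(a/(2√q)) ∈ [0, π] and ω = arctan((a - 2)/√(4q - a²)) ∈ (-π/2, π/2); equivalently, M(X)/q^{X/2} = cos(X·θ) - ((a - 2)/√(4q - a²))·sin(X·θ). -/
open Real Filter

/-- The coefficient sequence `c_N` with `c_0 = 1`, `c_1 = a - q - 1`,
`c_2 = a*c_1 - q*c_0 + q`, and `c_N = a*c_{N-1} - q*c_{N-2}` for `N ≥ 3`;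
these are the Taylor coefficients at `u = 0` of `(1-u)(1-qu)/(1-au+qu²)`,
the reciprocal of the zeta function of an elliptic curve over `F_q` with
Frobenius trace `a`. -/
def mertC (q a : ℤ) : ℕ → ℤ
  | 0 => 1
  | 1 => a - q - 1
  | 2 => a * (a - q - 1) - q * 1 + q
  | (N + 3) => a * mertC q a (N + 2) - q * mertC q a (N + 1)

/-- `M(X) = ∑_{N=0}^{X-1} c_N`, the Mertens summatory function of the
Möbius function of an elliptic curve over `F_q` with Frobenius trace `a`. -/
def mertM (q a : ℤ) (X : ℕ) : ℤ := ∑ N ∈ Finset.range X, mertC q a N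

/-!
For `X ≥ 1` the partial sums obey `M(X + 2) = a M(X + 1) - q M(X)` (at `X = 0` the extra `q` in
`c_2` breaks it). The characteristic roots of this recurrence are `√q e^{± i θ}` with
`2 √q cos θ = a`, so every real solution is `q^{X/2} (A cos Xθ + B sin Xθ)`; the initial values
`M(1) = 1`, `M(2) = a - q` force `A = 1` and `B = -(a - 2) / √(4q - a²)`. The amplitude-phase
form is harmonic addition `cos t - κ sin t = √(1 + κ²) cos (arctan κ + t)`.
-/

lemma mertM_add_three (q a : ℤ) (n : ℕ) :
    mertM q a (n + 3) = a * mertM q a (n + 2) - q * mertM q a (n + 1) := by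
  induction n with
  | zero =>
    simp only [mertM, Finset.sum_range_succ, Finset.sum_range_zero, mertC]
    ring
  | succ n ih =>
    have hc : mertC q a (n + 3) = a * mertC q a (n + 2) - q * mertC q a (n + 1) := rfl
    simp only [mertM, Finset.sum_range_succ] at ih ⊢
    linear_combination ih + hc

lemma eq_of_linear_recurrence {R : Type*} [Semiring R] {u v : ℕ → R} (x y : R)
    (hu : ∀ n, u (n + 2) = x * u (n + 1) + y * u n)
    (hv : ∀ n, v (n + 2) = x * v (n + 1) + y * v n)
    (h0 : u 0 = v 0) (h1 : u 1 = v 1) : u = v := by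
  funext n
  induction n using Nat.twoStepInduction with
  | zero => exact h0
  | one => exact h1
  | more n ih ih' => rw [hu, hv, ih, ih']

lemma pow_mul_cos_add_mul_sin_add_two (r θ A B : ℝ) (n : ℕ) :
    r ^ (n + 2) * (A * cos ((n + 2 : ℕ) * θ) + B * sin ((n + 2 : ℕ) * θ)) =
      2 * r * cos θ * (r ^ (n + 1) * (A * cos ((n + 1 : ℕ) * θ) + B * sin ((n + 1 : ℕ) * θ))) -
        r ^ 2 * (r ^ n * (A * cos (n * θ) + B * sin (n * θ))) := by
  have hnext : ((n + 2 : ℕ) : ℝ) * θ = (n + 1 : ℕ) * θ + θ := by push_cast; ring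
  have hprev : (n : ℝ) * θ = (n + 1 : ℕ) * θ - θ := by push_cast; ring
  rw [hnext, hprev, cos_add, sin_add, cos_sub, sin_sub]
  ring

lemma cos_arccos_div_two_sqrt {q a : ℝ} (hq : 0 < q) (ha : a ^ 2 ≤ 4 * q) :
    cos (arccos (a / (2 * √q))) = a / (2 * √q) := by
  have hsq : (a / (2 * √q)) ^ 2 ≤ 1 := by
    rw [div_pow, mul_pow, sq_sqrt hq.le, div_le_one (by positivity)]
    linarith
  have habs := (sq_le_one_iff_abs_le_one _).mp hsq
  exact cos_arccos (neg_le_of_abs_le habs) (le_of_abs_le habs)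

lemma sin_arccos_div_two_sqrt {q : ℝ} (hq : 0 < q) (a : ℝ) :
    sin (arccos (a / (2 * √q))) = √(4 * q - a ^ 2) / (2 * √q) := by
  have h : 1 - (a / (2 * √q)) ^ 2 = (4 * q - a ^ 2) / (2 * √q) ^ 2 := by
    field_simp
    rw [sq_sqrt hq.le]
    ring
  rw [sin_arccos, h, sqrt_div' _ (sq_nonneg _), sqrt_sq (by positivity)]

lemma cos_sub_mul_sin_eq_sqrt_mul_cos_arctan_add (κ t : ℝ) :
    cos t - κ * sin t = √(1 + κ ^ 2) * cos (arctan κ + t) := by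
  rw [cos_add, cos_arctan, sin_arctan]
  field_simp

lemma mertM_eq_sqrt_pow_mul (q a : ℤ) (ha : a ^ 2 < 4 * q) {X : ℕ} (hX : 1 ≤ X) :
    (mertM q a X : ℝ) = √(q : ℝ) ^ X *
      (cos (X * arccos (a / (2 * √(q : ℝ)))) -
        (a - 2) / √(4 * (q : ℝ) - a ^ 2) * sin (X * arccos (a / (2 * √(q : ℝ))))) := by
  have ha' : (a : ℝ) ^ 2 < 4 * q := by exact_mod_cast ha
  have hq : (0 : ℝ) < q := by nlinarith [sq_nonneg (a : ℝ)]
  have hcos := cos_arccos_div_two_sqrt hq ha'.le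
  have hsin := sin_arccos_div_two_sqrt hq (a : ℝ)
  set r := √(q : ℝ)
  set θ := arccos ((a : ℝ) / (2 * r))
  set S := √(4 * (q : ℝ) - a ^ 2)
  set κ := ((a : ℝ) - 2) / S
  have hr0 : r ≠ 0 := (sqrt_pos.mpr hq).ne'
  have hr2 : r ^ 2 = q := sq_sqrt hq.le
  replace hcos : 2 * r * cos θ = a := by rw [hcos]; field_simp
  replace hsin : 2 * r * sin θ = S := by rw [hsin]; field_simp
  have hκ : κ * S = a - 2 := div_mul_cancel₀ _ (sqrt_pos.mpr (by linarith)).ne'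
  clear_value κ S θ r
  set f : ℕ → ℝ := fun n ↦ r ^ n * (1 * cos (n * θ) + -κ * sin (n * θ)) with hf
  have hM : (fun n ↦ (mertM q a (n + 1) : ℝ)) = fun n ↦ f (n + 1) := by
    refine eq_of_linear_recurrence (a : ℝ) (-q) (fun n ↦ ?_) (fun n ↦ ?_) ?_ ?_
    · rw [mertM_add_three]
      push_cast
      ring
    · simp only [hf]
      rw [pow_mul_cos_add_mul_sin_add_two, hcos, hr2]
      ring
    · simp only [mertM, zero_add, Finset.range_one, Finset.sum_singleton, mertC, Int.cast_one, hf,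
        one_mul, neg_mul, pow_one, Nat.cast_one]
      linear_combination (κ * hsin + hκ - hcos) / 2
    · simp only [mertM, Nat.reduceAdd, Finset.sum_range_succ, Finset.range_one,
        Finset.sum_singleton, mertC, add_sub_cancel, Int.cast_sub, hf, one_mul, neg_mul,
        Nat.cast_ofNat, cos_two_mul, sin_two_mul]
      linear_combination (κ * S / 2 - (2 * r * cos θ + a) / 2) * hcos + hr2 +
        κ * r * cos θ * hsin + a / 2 * hκ
  obtain ⟨n, rfl⟩ := Nat.exists_eq_add_of_le' hX
  simpa only [Nat.cast_add, Nat.cast_one, sub_eq_add_neg, hf, one_mul, neg_mul] using congrFun hM n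

theorem mertens_formula_simple_zeroes_general (q a : ℤ) (ha : a ^ 2 < 4 * q) :
    ∀ X : ℕ, 1 ≤ X →
      (mertM q a X : ℝ) / (q : ℝ) ^ ((X : ℝ) / 2) =
        2 * Real.sqrt (((q : ℝ) + 1 - (a : ℝ)) / (4 * (q : ℝ) - (a : ℝ) ^ 2)) *
          Real.cos (Real.arctan (((a : ℝ) - 2) / Real.sqrt (4 * (q : ℝ) - (a : ℝ) ^ 2)) +
            (X : ℝ) * Real.arccos ((a : ℝ) / (2 * Real.sqrt (q : ℝ)))) ∧
      (mertM q a X : ℝ) / (q : ℝ) ^ ((X : ℝ) / 2) =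
        Real.cos ((X : ℝ) * Real.arccos ((a : ℝ) / (2 * Real.sqrt (q : ℝ)))) -
          ((a : ℝ) - 2) / Real.sqrt (4 * (q : ℝ) - (a : ℝ) ^ 2) *
            Real.sin ((X : ℝ) * Real.arccos ((a : ℝ) / (2 * Real.sqrt (q : ℝ)))) := by
  intro X hX
  have ha' : (a : ℝ) ^ 2 < 4 * q := by exact_mod_cast ha
  have hq : (0 : ℝ) < q := by nlinarith [sq_nonneg (a : ℝ)]
  have hnormalized : (mertM q a X : ℝ) / (q : ℝ) ^ ((X : ℝ) / 2) =
      cos (X * arccos (a / (2 * √(q : ℝ)))) -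
        (a - 2) / √(4 * (q : ℝ) - a ^ 2) * sin (X * arccos (a / (2 * √(q : ℝ)))) := by
    rw [rpow_div_two_eq_sqrt _ hq.le, rpow_natCast, mertM_eq_sqrt_pow_mul q a ha hX,
      mul_div_cancel_left₀ _ (pow_pos (sqrt_pos.mpr hq) X).ne']
  have hamplitude : √(1 + ((a - 2) / √(4 * (q : ℝ) - a ^ 2)) ^ 2) =
      2 * √((q + 1 - a) / (4 * (q : ℝ) - a ^ 2)) := by
    have hD : 0 < 4 * (q : ℝ) - a ^ 2 := by linarith
    rw [← sqrt_sq (zero_le_two : (0 : ℝ) ≤ 2), ← sqrt_mul (sq_nonneg 2), div_pow, sq_sqrt hD.le]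
    congr 1
    field_simp
    ring
  refine ⟨?_, hnormalized⟩
  rw [hnormalized, cos_sub_mul_sin_eq_sqrt_mul_cos_arctan_add, hamplitude]

theorem mertens_formula_simple_zeroes (q a : ℤ) (hq : 2 ≤ q) (ha : a ^ 2 < 4 * q) :
    ∀ X : ℕ, 1 ≤ X →
      (mertM q a X : ℝ) / (q : ℝ) ^ ((X : ℝ) / 2) =
        2 * Real.sqrt (((q : ℝ) + 1 - (a : ℝ)) / (4 * (q : ℝ) - (a : ℝ) ^ 2)) *
          Real.cos (Real.arctan (((a : ℝ) - 2) / Real.sqrt (4 * (q : ℝ) - (a : ℝ) ^ 2)) +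
            (X : ℝ) * Real.arccos ((a : ℝ) / (2 * Real.sqrt (q : ℝ)))) ∧
      (mertM q a X : ℝ) / (q : ℝ) ^ ((X : ℝ) / 2) =
        Real.cos ((X : ℝ) * Real.arccos ((a : ℝ) / (2 * Real.sqrt (q : ℝ)))) -
          ((a : ℝ) - 2) / Real.sqrt (4 * (q : ℝ) - (a : ℝ) ^ 2) *
            Real.sin ((X : ℝ) * Real.arccos ((a : ℝ) / (2 * Real.sqrt (q : ℝ)))) :=
  mertens_formula_simple_zeroes_general q a ha
end

section
/- Let r ≥ 2 be an integer and suppose q = r² and a = 2r (so a = 2√q). Then for every positive integer X, M(X) = r^X − (r − 1)·r^{X−1}·X; equivalently, M(X)/q^{X/2} = −(1 − 1/√q)·X + 1. -/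
open Real Filter

/-!
When `a = 2√q` the denominator `1 - au + qu²` is the square `(1 - ru)²`, so the
coefficients `c_N` are polynomial-times-geometric: `c_{N+1} = -(r-1)² (N+1) r^N`.
Summing this closed form telescopes to `M(X) = r^X - (r-1) r^{X-1} X`, and dividing
by `q^{X/2} = r^X` gives the normalised formula.
-/

lemma mertC_sq_two_mul_succ (r : ℤ) (n : ℕ) :
    mertC (r ^ 2) (2 * r) (n + 1) = -(r - 1) ^ 2 * (n + 1) * r ^ n := by
  induction n using Nat.twoStepInduction with
  | zero => simp only [mertC]; ring
  | one => simp only [mertC]; push_cast; ring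
  | more n ih₀ ih₁ =>
    rw [mertC, ih₁, ih₀]
    push_cast
    ring

lemma mertM_sq_two_mul_succ (r : ℤ) (n : ℕ) :
    mertM (r ^ 2) (2 * r) (n + 1) = r ^ (n + 1) - (r - 1) * r ^ n * (n + 1) := by
  induction n with
  | zero => simp [mertM, mertC]
  | succ n ih =>
    rw [mertM, Finset.sum_range_succ, ← mertM, ih, mertC_sq_two_mul_succ]
    push_cast
    ring

lemma mertM_sq_two_mul {X : ℕ} (r : ℤ) (hX : 1 ≤ X) :
    mertM (r ^ 2) (2 * r) X = r ^ X - (r - 1) * r ^ (X - 1) * X := by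
  obtain ⟨n, rfl⟩ := Nat.exists_eq_add_of_le' hX
  rw [mertM_sq_two_mul_succ, Nat.add_sub_cancel]
  push_cast
  ring

lemma div_sq_rpow_half_eq {r M : ℝ} (hr : 0 < r) {X : ℕ} (hX : 1 ≤ X)
    (hM : M = r ^ X - (r - 1) * r ^ (X - 1) * X) :
    M / (r ^ 2) ^ ((X : ℝ) / 2) = -(1 - 1 / √(r ^ 2)) * X + 1 := by
  obtain ⟨n, rfl⟩ := Nat.exists_eq_add_of_le' hX
  rw [Real.rpow_div_two_eq_sqrt _ (by positivity), Real.sqrt_sq hr.le, Real.rpow_natCast, hM,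
    Nat.add_sub_cancel]
  field_simp
  push_cast
  ring

theorem mertens_formula_double_zero_plus (r : ℤ) (hr : 2 ≤ r) (q a : ℤ)
    (hq : q = r ^ 2) (ha : a = 2 * r) :
    ∀ X : ℕ, 1 ≤ X →
      mertM q a X = r ^ X - (r - 1) * r ^ (X - 1) * (X : ℤ) ∧
      (mertM q a X : ℝ) / (q : ℝ) ^ ((X : ℝ) / 2) =
        -(1 - 1 / Real.sqrt (q : ℝ)) * (X : ℝ) + 1 := by
  subst hq ha
  intro X hX
  have hM := mertM_sq_two_mul r hX
  refine ⟨hM, ?_⟩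
  push_cast
  exact div_sq_rpow_half_eq (by exact_mod_cast (by omega : (0 : ℤ) < r)) hX
    (by exact_mod_cast hM)
end

section
/- Let r ≥ 2 be an integer and suppose q = r² and a = −2r (so a = −2√q). Then for every positive integer X, M(X) = (−r)^X − (−1)^X·(r + 1)·r^{X−1}·X; equivalently, M(X)/q^{X/2} = −(−1)^X·(1 + 1/√q)·X + (−1)^X. -/
/-!
For `q = r²` and `a = -2r` the denominator `1 - a u + q u²` of `1 / Z(u)` is `(1 + r u)²`,
a double pole at `u = -1/r`. Hence `c_N` is `(-r)^N` times a polynomial of degree one in `N`,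
namely `c_{n+1} = (-1)^{n+1} r^n (n + 1) (r + 1)²`, checked against the recurrence. Summing
gives the closed form of `M(X)`, and dividing by `q^{X/2} = r^X` gives the normalized form.
-/

open Real Filter

theorem mertC_succ_of_double_root (r : ℤ) :
    ∀ n : ℕ, mertC (r ^ 2) (-(2 * r)) (n + 1) =
      (-1) ^ (n + 1) * r ^ n * ((n : ℤ) + 1) * (r + 1) ^ 2
  | 0 => by simp only [mertC]; ring
  | 1 => by simp only [mertC]; ring
  | n + 2 => by
      rw [mertC, mertC_succ_of_double_root r n, mertC_succ_of_double_root r (n + 1)]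
      push_cast
      ring

theorem mertM_succ (q a : ℤ) (X : ℕ) : mertM q a (X + 1) = mertM q a X + mertC q a X :=
  Finset.sum_range_succ _ _

theorem mertM_succ_of_double_root (r : ℤ) (n : ℕ) :
    mertM (r ^ 2) (-(2 * r)) (n + 1) =
      (-r) ^ (n + 1) - (-1) ^ (n + 1) * (r + 1) * r ^ n * ((n : ℤ) + 1) := by
  induction n with
  | zero => simp [mertM, mertC]
  | succ n ih =>
      rw [mertM_succ, ih, mertC_succ_of_double_root]
      push_cast
      ring

theorem mertens_formula_double_zero_minus (r : ℤ) (hr : 2 ≤ r) (q a : ℤ)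
    (hq : q = r ^ 2) (ha : a = -(2 * r)) :
    ∀ X : ℕ, 1 ≤ X →
      mertM q a X = (-r) ^ X - (-1) ^ X * (r + 1) * r ^ (X - 1) * (X : ℤ) ∧
      (mertM q a X : ℝ) / (q : ℝ) ^ ((X : ℝ) / 2) =
        -(-1 : ℝ) ^ X * (1 + 1 / Real.sqrt (q : ℝ)) * (X : ℝ) + (-1 : ℝ) ^ X := by
  intro X hX
  obtain ⟨n, rfl⟩ := Nat.exists_eq_add_of_le' hX
  subst hq ha
  have hM := mertM_succ_of_double_root r n
  have hr_pos : (0 : ℝ) < r := by exact_mod_cast (by omega : (0 : ℤ) < r)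
  have hsqrt : √((r ^ 2 : ℤ) : ℝ) = r := by
    push_cast
    exact Real.sqrt_sq hr_pos.le
  refine ⟨by simpa using hM, ?_⟩
  rw [Real.rpow_div_two_eq_sqrt _ (by positivity), hsqrt, Real.rpow_natCast, hM]
  push_cast
  field_simp
  ring
end

section
/- Let r ≥ 2 be an integer and suppose q = r² and a = ε·2r with ε ∈ {+1, −1}. Then c_0 = 1, and for every integer N ≥ 1, c_N = −ε^{N+1}·(r − ε)²·N·r^{N−1}. -/
open Real Filter

theorem coeff_formula_double_zero (r : ℤ) (hr : 2 ≤ r) (ε : ℤ) (hε : ε = 1 ∨ ε = -1)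
    (q a : ℤ) (hq : q = r ^ 2) (ha : a = ε * (2 * r)) :
    mertC q a 0 = 1 ∧
    ∀ N : ℕ, 1 ≤ N →
      mertC q a N = -ε ^ (N + 1) * (r - ε) ^ 2 * (N : ℤ) * r ^ (N - 1) := by
  have hε2 : ε * ε = 1 := by rcases hε with h | h <;> simp [h]
  have key : ∀ n : ℕ, mertC q a (n + 1) =
      -ε ^ (n + 2) * (r - ε) ^ 2 * ((n : ℤ) + 1) * r ^ n := by
    intro n
    induction n using Nat.strong_induction_on with
    | _ n ih =>
      match n with
      | 0 =>
        simp only [mertC, pow_succ, pow_zero]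
        subst hq ha
        linear_combination (ε^2 + r^2 - 2*ε*r + 1) * hε2
      | 1 =>
        simp only [mertC, pow_succ, pow_zero]
        subst hq ha
        push_cast
        linear_combination (2*ε*r*(ε^2+1) + 2*ε*r^3 - 4*ε^2*r^2) * hε2
      | (m + 2) =>
        have h1 := ih m (by omega)
        have h2 := ih (m + 1) (by omega)
        show a * mertC q a (m + 2) - q * mertC q a (m + 1) = _
        rw [h2, h1]
        subst hq ha
        push_cast
        linear_combination (((m:ℤ)+1) * ε^m * r^m * (-ε^2*r^4 + 2*ε^3*r^3 - ε^4*r^2)) * hε2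
  refine ⟨rfl, fun N hN => ?_⟩
  obtain ⟨n, rfl⟩ : ∃ n, N = n + 1 := ⟨N - 1, by omega⟩
  rw [key n]
  push_cast
  ring_nf
end

section
/- Suppose a² < 4q. Then for every positive integer X, |M(X)| ≤ 2·√((q + 1 − a)/(4q − a²))·q^{X/2}. -/
open Real Filter

/-!
The partial sums `M(X)` satisfy the same recurrence `M(X+2) = a M(X+1) - q M(X)` as the
coefficients (from `X = 1` on), so the norm form `q x² - a x y + y²` of `ℤ[π]`,
`π² - a π + q = 0`, evaluated at `(M(X), M(X+1))` is multiplied by `q` at each step: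
it equals `q^X (q + 1 - a)`. Completing the square, `(4q - a²) x² ≤ 4 (q x² - a x y + y²)`,
so `M(X)² ≤ 4 (q + 1 - a) / (4q - a²) · q^X`.
-/

namespace Mertens

variable (q a : ℤ)

lemma mertM_succ (X : ℕ) : mertM q a (X + 1) = mertM q a X + mertC q a X :=
  Finset.sum_range_succ _ _

lemma mertM_add_three (k : ℕ) :
    mertM q a (k + 3) = a * mertM q a (k + 2) - q * mertM q a (k + 1) := by
  induction k with
  | zero =>
    simp only [mertM, Finset.sum_range_succ, Finset.sum_range_zero, mertC]
    ring
  | succ k ih =>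
    have hc : mertC q a (k + 3) = a * mertC q a (k + 2) - q * mertC q a (k + 1) := rfl
    rw [mertM_succ q a (k + 3), hc]
    linear_combination ih - a * mertM_succ q a (k + 2) + q * mertM_succ q a (k + 1)

lemma mertM_normForm (k : ℕ) :
    q * mertM q a (k + 1) ^ 2 - a * mertM q a (k + 1) * mertM q a (k + 2)
      + mertM q a (k + 2) ^ 2 = q ^ (k + 1) * (q + 1 - a) := by
  induction k with
  | zero =>
    simp only [mertM, Finset.sum_range_succ, Finset.sum_range_zero, mertC]
    ring
  | succ k ih =>
    rw [mertM_add_three q a k]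
    linear_combination q * ih

lemma discr_mul_mertM_sq_le (k : ℕ) :
    (4 * q - a ^ 2) * mertM q a (k + 1) ^ 2 ≤ 4 * (q ^ (k + 1) * (q + 1 - a)) := by
  rw [← mertM_normForm]
  nlinarith [sq_nonneg (2 * mertM q a (k + 2) - a * mertM q a (k + 1))]

lemma mertM_sq_le {q a : ℤ} (ha : a ^ 2 < 4 * q) (k : ℕ) :
    (mertM q a (k + 1) : ℝ) ^ 2 ≤
      4 * (((q : ℝ) + 1 - a) / (4 * (q : ℝ) - (a : ℝ) ^ 2)) * (q : ℝ) ^ (k + 1) := by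
  have hdiscr : (0 : ℝ) < 4 * q - (a : ℝ) ^ 2 := by
    rw [sub_pos]
    exact_mod_cast ha
  have h : (4 * q - (a : ℝ) ^ 2) * (mertM q a (k + 1) : ℝ) ^ 2
      ≤ 4 * ((q : ℝ) ^ (k + 1) * (q + 1 - a)) := by
    exact_mod_cast discr_mul_mertM_sq_le q a k
  rw [mul_div_assoc', div_mul_eq_mul_div, le_div_iff₀ hdiscr]
  linarith

end Mertens

open Mertens in
theorem mertens_bound_simple_zeroes_general (q a : ℤ) (ha : a ^ 2 < 4 * q) :
    ∀ X : ℕ, 1 ≤ X →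
      |(mertM q a X : ℝ)| ≤
        2 * Real.sqrt (((q : ℝ) + 1 - (a : ℝ)) / (4 * (q : ℝ) - (a : ℝ) ^ 2)) *
          (q : ℝ) ^ ((X : ℝ) / 2) := by
  intro X hX
  obtain ⟨k, rfl⟩ := Nat.exists_eq_add_of_le' hX
  set c := ((q : ℝ) + 1 - a) / (4 * (q : ℝ) - (a : ℝ) ^ 2)
  have hq : (0 : ℝ) ≤ q := by exact_mod_cast (show (0 : ℤ) ≤ q by nlinarith [sq_nonneg a])
  have hc : 0 ≤ c := by
    have haq : (a : ℝ) ≤ q + 1 := by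
      exact_mod_cast (show a ≤ q + 1 by nlinarith [sq_nonneg (q - 1)])
    have hdiscr : (a : ℝ) ^ 2 < 4 * q := by exact_mod_cast ha
    exact div_nonneg (by linarith) (by linarith)
  rw [rpow_div_two_eq_sqrt _ hq, rpow_natCast]
  refine abs_le_of_sq_le_sq ?_ (by positivity)
  rw [mul_pow, mul_pow, sq_sqrt hc, ← pow_mul, mul_comm _ 2, pow_mul, sq_sqrt hq]
  linarith [mertM_sq_le ha k]

theorem mertens_bound_simple_zeroes (q a : ℤ) (hq : 2 ≤ q) (ha : a ^ 2 < 4 * q) :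
    ∀ X : ℕ, 1 ≤ X →
      |(mertM q a X : ℝ)| ≤
        2 * Real.sqrt (((q : ℝ) + 1 - (a : ℝ)) / (4 * (q : ℝ) - (a : ℝ) ^ 2)) *
          (q : ℝ) ^ ((X : ℝ) / 2) :=
  mertens_bound_simple_zeroes_general q a ha
end

section
/- Let r ≥ 2 be an integer and suppose q = r² and a = 2r or a = −2r (the cases a = ±2√q). Then limsup_{X→∞} |M(X)|/q^{X/2} = ∞; that is, for every real C > 0 there exist infinitely many positive integers X with |M(X)| > C·q^{X/2}. -/
open Real Filter

/-! Writing `a = 2s` and `q = s^2` with `|s| = r`, the denominator `1 - au + qu^2` is the square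
`(1 - su)^2`, and the double pole makes the coefficients grow like `N s^N`: explicitly
`c_{N+1} = -(N+1) s^N (s-1)^2` and `M(X+1) = s^X (X + 1 - X s)`. Since `q^{X/2} = |s|^X`, the ratio
`|M(X)| / q^{X/2}` grows linearly in `X`. -/

lemma mertC_double_root (s : ℤ) (N : ℕ) :
    mertC (s ^ 2) (2 * s) (N + 1) = -(N + 1) * s ^ N * (s - 1) ^ 2 := by
  induction N using Nat.twoStepInduction with
  | zero => simp only [mertC]; ring
  | one => simp only [mertC]; ring
  | more n ih₀ ih₁ =>
    rw [show n + 2 + 1 = n + 3 from rfl, mertC, ih₀, ih₁]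
    push_cast
    ring

lemma mertM_double_root (s : ℤ) (X : ℕ) :
    mertM (s ^ 2) (2 * s) (X + 1) = s ^ X * (X + 1 - X * s) := by
  induction X with
  | zero => simp [mertM, mertC]
  | succ n ih =>
    rw [mertM, Finset.sum_range_succ, ← mertM, ih, mertC_double_root]
    push_cast
    ring

lemma sq_rpow_div_two (x : ℝ) (X : ℕ) : (x ^ 2) ^ ((X : ℝ) / 2) = |x| ^ X := by
  rw [Real.rpow_div_two_eq_sqrt _ (sq_nonneg x), Real.sqrt_sq_eq_abs, Real.rpow_natCast]

lemma tendsto_abs_mertM_div_double_root {s : ℤ} (hs : 1 < |s|) :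
    Tendsto (fun X : ℕ => |(mertM (s ^ 2) (2 * s) X : ℝ)| / |(s : ℝ)| ^ X) atTop atTop := by
  rw [← tendsto_add_atTop_iff_nat 1]
  have hs' : (1 : ℝ) < |(s : ℝ)| := by exact_mod_cast hs
  have hlin : Tendsto (fun X : ℕ => ((X : ℝ) * (|(s : ℝ)| - 1) - 1) / |(s : ℝ)|) atTop atTop :=
    (tendsto_atTop_add_const_right _ (-1)
      (tendsto_natCast_atTop_atTop.atTop_mul_const (sub_pos.2 hs'))).atTop_div_const
      (one_pos.trans hs')
  refine tendsto_atTop_mono (fun X => ?_) hlin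
  have hM : |(mertM (s ^ 2) (2 * s) (X + 1) : ℝ)| = |(s : ℝ)| ^ X * |X + 1 - X * (s : ℝ)| := by
    rw [mertM_double_root]; push_cast; rw [abs_mul, abs_pow]
  rw [hM, pow_succ, mul_div_mul_left _ _ (pow_pos (one_pos.trans hs') X).ne']
  gcongr
  have := abs_sub_abs_le_abs_sub (X * (s : ℝ)) (X + 1)
  rw [abs_sub_comm, abs_mul, Nat.abs_cast, abs_of_nonneg (by positivity : (0 : ℝ) ≤ X + 1)] at this
  linarith

theorem mertens_limsup_infinite_double_zero (r : ℤ) (hr : 2 ≤ r) (q a : ℤ)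
    (hq : q = r ^ 2) (ha : a = 2 * r ∨ a = -(2 * r)) :
    ∀ C : ℝ, 0 < C → ∀ X₀ : ℕ, ∃ X : ℕ, X₀ ≤ X ∧ 1 ≤ X ∧
      |(mertM q a X : ℝ)| > C * (q : ℝ) ^ ((X : ℝ) / 2) := by
  intro C _ X₀
  obtain ⟨s, rfl, rfl, hs⟩ : ∃ s : ℤ, q = s ^ 2 ∧ a = 2 * s ∧ 1 < |s| := by
    rcases ha with rfl | rfl
    · exact ⟨r, hq, rfl, by rw [abs_of_pos (by omega)]; omega⟩
    · exact ⟨-r, by rw [hq, neg_sq], by ring, by rw [abs_neg, abs_of_pos (by omega)]; omega⟩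
  obtain ⟨X, hX, hXC⟩ := ((eventually_ge_atTop (max X₀ 1)).and
    ((tendsto_abs_mertM_div_double_root hs).eventually_gt_atTop C)).exists
  refine ⟨X, le_of_max_le_left hX, le_of_max_le_right hX, ?_⟩
  have hs' : (0 : ℝ) < |(s : ℝ)| := one_pos.trans (by exact_mod_cast hs)
  rwa [Int.cast_pow, sq_rpow_div_two, gt_iff_lt, ← lt_div_iff₀ (pow_pos hs' X)]
end

section
/- Let r ≥ 2 be an integer and suppose q = r² and a = r (the case a = √q, Frobenius angle θ = π/3). Then for every positive integer X: M(X) = r^X if X ≡ 0 (mod 6); M(X) = r^{X−1} if X ≡ 1 (mod 6); M(X) = −r^X + r^{X−1} if X ≡ 2 (mod 6); M(X) = −r^X if X ≡ 3 (mod 6); M(X) = −r^{X−1} if X ≡ 4 (mod 6); M(X) = r^X − r^{X−1} if X ≡ 5 (mod 6). Consequently |M(X)| ≤ q^{X/2} for all X ≥ 1, with equality if and only if X ≡ 0 (mod 3). -/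
open Real Filter

/-! With `a = r` and `q = r²` the characteristic polynomial `T² - rT + r²` divides `T³ + r³`,
so the recurrence (in force from `c_1` on) gives `c_{n+3} = -r³ c_n` for `n ≥ 1`, and summing,
`M(X+3) = -r³ M(X)` for `X ≥ 1`. Hence `M(3k + j) = (-r³)^k M(j)` with `M(1) = 1`,
`M(2) = r - r²`, `M(3) = -r³`; in absolute value this is `r^{3k+j} = q^{(3k+j)/2}` for `j = 3` and
strictly smaller for `j = 1, 2`. -/

section SqrtTrace

variable (r : ℤ)

lemma mertC_sqrt_add_four (n : ℕ) :
    mertC (r ^ 2) r (n + 4) = -r ^ 3 * mertC (r ^ 2) r (n + 1) := by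
  simp only [mertC]
  ring

@[simp] lemma mertM_sqrt_one : mertM (r ^ 2) r 1 = 1 := by
  simp [mertM, mertC]

@[simp] lemma mertM_sqrt_two : mertM (r ^ 2) r 2 = r - r ^ 2 := by
  simp [mertM, Finset.sum_range_succ, mertC]

@[simp] lemma mertM_sqrt_three : mertM (r ^ 2) r 3 = -r ^ 3 := by
  simp [mertM, Finset.sum_range_succ, mertC]
  ring

lemma mertM_sqrt_add_four (X : ℕ) :
    mertM (r ^ 2) r (X + 4) = -r ^ 3 * mertM (r ^ 2) r (X + 1) := by
  induction X with
  | zero =>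
    rw [mertM, Finset.sum_range_succ, ← mertM, mertM_sqrt_three, zero_add, mertM_sqrt_one]
    simp only [mertC]
    ring
  | succ X ih =>
    rw [mertM, Finset.sum_range_succ, ← mertM, ih, mertC_sqrt_add_four, mertM, mertM,
      Finset.sum_range_succ (n := X + 1)]
    ring

@[simp] lemma mertM_sqrt_four : mertM (r ^ 2) r 4 = -r ^ 3 := by
  simpa using mertM_sqrt_add_four r 0

@[simp] lemma mertM_sqrt_five : mertM (r ^ 2) r 5 = r ^ 5 - r ^ 4 := by
  rw [mertM_sqrt_add_four r 1, mertM_sqrt_two]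
  ring

@[simp] lemma mertM_sqrt_six : mertM (r ^ 2) r 6 = r ^ 6 := by
  rw [mertM_sqrt_add_four r 2, mertM_sqrt_three]
  ring

lemma mertM_sqrt_three_mul_add (k j : ℕ) :
    mertM (r ^ 2) r (3 * k + j + 1) = (-r ^ 3) ^ k * mertM (r ^ 2) r (j + 1) := by
  induction k with
  | zero => simp
  | succ k ih =>
    rw [show 3 * (k + 1) + j + 1 = 3 * k + j + 4 by ring, mertM_sqrt_add_four, ih, pow_succ]
    ring

lemma mertM_sqrt_six_mul_add (k j : ℕ) :
    mertM (r ^ 2) r (6 * k + j + 1) = r ^ (6 * k) * mertM (r ^ 2) r (j + 1) := by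
  rw [show 6 * k = 3 * (2 * k) by ring, mertM_sqrt_three_mul_add, pow_mul, pow_mul, neg_sq,
    ← pow_mul]

variable {r}

lemma abs_mertM_sqrt_three_mul_add (hr : 0 ≤ r) (k j : ℕ) :
    |mertM (r ^ 2) r (3 * k + j + 1)| = r ^ (3 * k) * |mertM (r ^ 2) r (j + 1)| := by
  rw [mertM_sqrt_three_mul_add, abs_mul, abs_pow, abs_neg, abs_pow, abs_of_nonneg hr, pow_mul]

lemma abs_mertM_sqrt_of_mod_three_eq_zero (hr : 0 ≤ r) {X : ℕ} (hX : 1 ≤ X)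
    (h : X % 3 = 0) : |mertM (r ^ 2) r X| = r ^ X := by
  obtain ⟨k, rfl⟩ : ∃ k, X = 3 * k + 2 + 1 := ⟨X / 3 - 1, by omega⟩
  rw [abs_mertM_sqrt_three_mul_add hr, mertM_sqrt_three, abs_neg, abs_pow, abs_of_nonneg hr,
    ← pow_add]

lemma abs_mertM_sqrt_lt (hr : 2 ≤ r) {X : ℕ} (h : X % 3 ≠ 0) :
    |mertM (r ^ 2) r X| < r ^ X := by
  obtain ⟨k, j, hj, rfl⟩ : ∃ k j, j < 2 ∧ X = 3 * k + j + 1 :=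
    ⟨X / 3, X % 3 - 1, by omega, by omega⟩
  rw [abs_mertM_sqrt_three_mul_add (by omega), add_assoc, pow_add]
  refine mul_lt_mul_of_pos_left ?_ (by positivity)
  interval_cases j
  · simpa using hr.trans_lt' one_lt_two
  · rw [mertM_sqrt_two, abs_sub_comm, abs_of_nonneg (by nlinarith)]
    simpa using hr.trans_lt' two_pos

end SqrtTrace

lemma Real.sq_rpow_natCast_div_two {x : ℝ} (hx : 0 ≤ x) (n : ℕ) :
    (x ^ 2) ^ ((n : ℝ) / 2) = x ^ n := by
  rw [← Real.rpow_natCast_mul hx, Nat.cast_ofNat, mul_div_cancel₀ _ two_ne_zero,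
    Real.rpow_natCast]

theorem mertens_case_sqrt_q (r : ℤ) (hr : 2 ≤ r) (q a : ℤ)
    (hq : q = r ^ 2) (ha : a = r) :
    ∀ X : ℕ, 1 ≤ X →
      (X % 6 = 0 → mertM q a X = r ^ X) ∧
      (X % 6 = 1 → mertM q a X = r ^ (X - 1)) ∧
      (X % 6 = 2 → mertM q a X = -r ^ X + r ^ (X - 1)) ∧
      (X % 6 = 3 → mertM q a X = -r ^ X) ∧
      (X % 6 = 4 → mertM q a X = -r ^ (X - 1)) ∧
      (X % 6 = 5 → mertM q a X = r ^ X - r ^ (X - 1)) ∧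
      |(mertM q a X : ℝ)| ≤ (q : ℝ) ^ ((X : ℝ) / 2) ∧
      (|(mertM q a X : ℝ)| = (q : ℝ) ^ ((X : ℝ) / 2) ↔ X % 3 = 0) := by
  subst q a
  intro X hX
  have period : ∀ j < 6, X % 6 = (j + 1) % 6 → ∃ k, X = 6 * k + j + 1 :=
    fun j hj h => ⟨(X - 1) / 6, by omega⟩
  have hpow : ((r ^ 2 : ℤ) : ℝ) ^ ((X : ℝ) / 2) = ((r ^ X : ℤ) : ℝ) := by
    push_cast
    exact Real.sq_rpow_natCast_div_two (by positivity) X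
  rw [hpow, ← Int.cast_abs, Int.cast_le, Int.cast_inj]
  refine ⟨fun h => ?_, fun h => ?_, fun h => ?_, fun h => ?_, fun h => ?_, fun h => ?_, ?_, ?_⟩
  · obtain ⟨k, rfl⟩ := period 5 (by norm_num) h
    rw [mertM_sqrt_six_mul_add]; norm_num; ring
  · obtain ⟨k, rfl⟩ := period 0 (by norm_num) h
    rw [mertM_sqrt_six_mul_add r k 0]; norm_num
  · obtain ⟨k, rfl⟩ := period 1 (by norm_num) h
    rw [mertM_sqrt_six_mul_add]; norm_num; ring
  · obtain ⟨k, rfl⟩ := period 2 (by norm_num) h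
    rw [mertM_sqrt_six_mul_add]; norm_num; ring
  · obtain ⟨k, rfl⟩ := period 3 (by norm_num) h
    rw [mertM_sqrt_six_mul_add]; norm_num; ring
  · obtain ⟨k, rfl⟩ := period 4 (by norm_num) h
    rw [mertM_sqrt_six_mul_add]; norm_num; ring
  · rcases eq_or_ne (X % 3) 0 with h | h
    · exact (abs_mertM_sqrt_of_mod_three_eq_zero (by omega) hX h).le
    · exact (abs_mertM_sqrt_lt hr h).le
  · refine ⟨fun he => ?_, abs_mertM_sqrt_of_mod_three_eq_zero (by omega) hX⟩
    by_contra h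
    exact (abs_mertM_sqrt_lt hr h).ne he
end

section
/- Let r ≥ 2 be an integer and suppose q = r² and a = −r (the case a = −√q, Frobenius angle θ = 2π/3). Then for every positive integer X: M(X) = r^X if X ≡ 0 (mod 3); M(X) = r^{X−1} if X ≡ 1 (mod 3); M(X) = −r^X − r^{X−1} if X ≡ 2 (mod 3). Consequently limsup_{X→∞} |M(X)|/q^{X/2} = 1 + 1/√q, and there are infinitely many X with |M(X)| > q^{X/2}. -/
open Real Filter

lemma cTriple (r : ℤ) : ∀ k : ℕ,
    mertC (r^2) (-r) (3*k+1) = -(r^(3*k)*(r^2+r+1)) ∧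
    mertC (r^2) (-r) (3*k+2) = r^(3*k)*r*(r^2+r+1) ∧
    mertC (r^2) (-r) (3*k+3) = 0 := by
  intro k
  induction k with
  | zero =>
    refine ⟨by rw [mertC]; ring, by rw [mertC]; ring, ?_⟩
    rw [show 3*0+3 = 0+3 from rfl, mertC, mertC, mertC]; ring
  | succ k ih =>
    obtain ⟨h1, h2, h3⟩ := ih
    have e1 : 3*(k+1)+1 = (3*k+1)+3 := by ring
    have e2 : 3*(k+1)+2 = (3*k+2)+3 := by ring
    have e3 : 3*(k+1)+3 = (3*k+3)+3 := by ring
    have p1 : mertC (r^2) (-r) (3*(k+1)+1) = -(r^(3*(k+1))*(r^2+r+1)) := by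
      rw [e1, mertC, show 3*k+1+2 = 3*k+3 from by ring, show 3*k+1+1 = 3*k+2 from by ring,
        h3, h2, show 3*(k+1) = 3*k+3 from by ring]; ring
    have p2 : mertC (r^2) (-r) (3*(k+1)+2) = r^(3*(k+1))*r*(r^2+r+1) := by
      rw [e2, mertC, show 3*k+2+2 = 3*(k+1)+1 from by ring, show 3*k+2+1 = 3*k+3 from by ring,
        p1, h3, show 3*(k+1) = 3*k+3 from by ring]; ring
    refine ⟨p1, p2, ?_⟩
    rw [e3, mertC, show 3*k+3+2 = 3*(k+1)+2 from by ring, show 3*k+3+1 = 3*(k+1)+1 from by ring,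
      p2, p1]; ring

lemma mTriple (r : ℤ) : ∀ k : ℕ,
    mertM (r^2) (-r) (3*k+1) = r^(3*k) ∧
    mertM (r^2) (-r) (3*k+2) = -r^(3*k+2) - r^(3*k+1) ∧
    mertM (r^2) (-r) (3*k+3) = r^(3*k+3) := by
  have hM : ∀ X : ℕ, mertM (r^2) (-r) (X+1) = mertM (r^2) (-r) X + mertC (r^2) (-r) X := by
    intro X; exact Finset.sum_range_succ _ _
  intro k
  induction k with
  | zero =>
    have m1 : mertM (r^2) (-r) 1 = r^(3*0) := by
      simp [mertM, Finset.sum_range_one, mertC]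
    have m2 : mertM (r^2) (-r) 2 = -r^(3*0+2) - r^(3*0+1) := by
      rw [show (2:ℕ) = 1+1 from rfl, hM, m1, mertC]; ring
    have m3 : mertM (r^2) (-r) 3 = r^(3*0+3) := by
      rw [show (3:ℕ) = 2+1 from rfl, hM, m2, mertC]; ring
    exact ⟨m1, m2, m3⟩
  | succ k ih =>
    obtain ⟨h1, h2, h3⟩ := ih
    obtain ⟨c1, c2, c3⟩ := cTriple r k
    have p1 : mertM (r^2) (-r) (3*(k+1)+1) = r^(3*(k+1)) := by
      rw [show 3*(k+1)+1 = (3*k+3)+1 from by ring, hM, h3, c3,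
        show 3*(k+1) = 3*k+3 from by ring]; ring
    obtain ⟨d1, d2, d3⟩ := cTriple r (k+1)
    have p2 : mertM (r^2) (-r) (3*(k+1)+2) = -r^(3*(k+1)+2) - r^(3*(k+1)+1) := by
      rw [show 3*(k+1)+2 = (3*(k+1)+1)+1 from by ring, hM, p1, d1]; ring
    have p3 : mertM (r^2) (-r) (3*(k+1)+3) = r^(3*(k+1)+3) := by
      rw [show 3*(k+1)+3 = (3*(k+1)+2)+1 from by ring, hM, p2, d2]; ring
    exact ⟨p1, p2, p3⟩

theorem mertens_case_neg_sqrt_q (r : ℤ) (hr : 2 ≤ r) (q a : ℤ)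
    (hq : q = r ^ 2) (ha : a = -r) :
    (∀ X : ℕ, 1 ≤ X →
      (X % 3 = 0 → mertM q a X = r ^ X) ∧
      (X % 3 = 1 → mertM q a X = r ^ (X - 1)) ∧
      (X % 3 = 2 → mertM q a X = -r ^ X - r ^ (X - 1))) ∧
    Filter.limsup (fun X : ℕ => |(mertM q a X : ℝ)| / (q : ℝ) ^ ((X : ℝ) / 2)) Filter.atTop =
      1 + 1 / Real.sqrt (q : ℝ) ∧
    ∀ X₀ : ℕ, ∃ X : ℕ, X₀ ≤ X ∧ 1 ≤ X ∧
      |(mertM q a X : ℝ)| > (q : ℝ) ^ ((X : ℝ) / 2) := by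
  subst hq ha
  have hR : (2:ℝ) ≤ (r:ℝ) := by exact_mod_cast hr
  have hR0 : (0:ℝ) < (r:ℝ) := by linarith
  have part1 : ∀ X : ℕ, 1 ≤ X →
      (X % 3 = 0 → mertM (r^2) (-r) X = r ^ X) ∧
      (X % 3 = 1 → mertM (r^2) (-r) X = r ^ (X - 1)) ∧
      (X % 3 = 2 → mertM (r^2) (-r) X = -r ^ X - r ^ (X - 1)) := by
    intro X hX
    refine ⟨?_, ?_, ?_⟩
    · intro h
      obtain ⟨k, rfl⟩ : ∃ k, X = 3*k+3 := ⟨X/3 - 1, by omega⟩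
      exact (mTriple r k).2.2
    · intro h
      obtain ⟨k, rfl⟩ : ∃ k, X = 3*k+1 := ⟨X/3, by omega⟩
      rw [show 3*k+1-1 = 3*k from rfl]
      exact (mTriple r k).1
    · intro h
      obtain ⟨k, rfl⟩ : ∃ k, X = 3*k+2 := ⟨X/3, by omega⟩
      rw [show 3*k+2-1 = 3*k+1 from rfl]
      exact (mTriple r k).2.1
  have hpow : ∀ X : ℕ, ((r^2 : ℤ) : ℝ) ^ ((X : ℝ) / 2) = (r:ℝ) ^ X := by
    intro X
    push_cast
    rw [← Real.rpow_natCast (r:ℝ) 2, ← Real.rpow_mul hR0.le]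
    rw [show ((2:ℕ):ℝ) * ((X:ℝ)/2) = ((X:ℕ):ℝ) from by push_cast; ring, Real.rpow_natCast]
  have hsqrt : Real.sqrt ((r^2 : ℤ) : ℝ) = (r:ℝ) := by
    push_cast
    exact Real.sqrt_sq hR0.le
  have habs : ∀ k : ℕ, |((mertM (r^2) (-r) (3*k+2) : ℤ) : ℝ)| =
      (r:ℝ)^(3*k+2) + (r:ℝ)^(3*k+1) := by
    intro k
    rw [(mTriple r k).2.1]
    have : ((-r^(3*k+2) - r^(3*k+1) : ℤ) : ℝ) = -((r:ℝ)^(3*k+2) + (r:ℝ)^(3*k+1)) := by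
      push_cast; ring
    rw [this, abs_neg, abs_of_nonneg (by positivity)]
  set f : ℕ → ℝ := fun X => |(mertM (r^2) (-r) X : ℝ)| / ((r^2:ℤ) : ℝ) ^ ((X : ℝ) / 2) with hf
  have heq2 : ∀ k : ℕ, f (3*k+2) = 1 + 1/(r:ℝ) := by
    intro k
    simp only [hf, hpow, habs k]
    field_simp
    ring
  have hub : ∀ X, f X ≤ 1 + 1/(r:ℝ) := by
    intro X
    rcases Nat.eq_zero_or_pos X with h0 | h1
    · subst h0
      have : mertM (r^2) (-r) 0 = 0 := by simp [mertM]
      simp only [hf, this]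
      norm_num
      positivity
    · have h3 := X.mod_lt (y := 3) (by norm_num)
      simp only [hf, hpow]
      interval_cases h : X % 3
      · obtain ⟨k, rfl⟩ : ∃ k, X = 3*k+3 := ⟨X/3 - 1, by omega⟩
        rw [(mTriple r k).2.2]
        push_cast
        rw [abs_of_nonneg (by positivity), div_self (by positivity)]
        have : 0 < 1/(r:ℝ) := by positivity
        linarith
      · obtain ⟨k, rfl⟩ : ∃ k, X = 3*k+1 := ⟨X/3, by omega⟩
        rw [(mTriple r k).1]
        push_cast
        rw [abs_of_nonneg (by positivity)]
        have hd : (r:ℝ)^(3*k)/(r:ℝ)^(3*k+1) = 1/(r:ℝ) := by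
          rw [pow_succ]; field_simp
        rw [hd]
        linarith
      · obtain ⟨k, rfl⟩ : ∃ k, X = 3*k+2 := ⟨X/3, by omega⟩
        have := heq2 k
        simp only [hf, hpow] at this
        rw [this]
  have hfr : ∃ᶠ X in atTop, 1 + 1/(r:ℝ) ≤ f X := by
    rw [Filter.frequently_atTop]
    intro N
    exact ⟨3*N+2, by omega, (heq2 N).ge⟩
  have hbdd : Filter.IsBoundedUnder (· ≤ ·) Filter.atTop f :=
    Filter.isBoundedUnder_of ⟨1 + 1/(r:ℝ), hub⟩
  have hbdd' : Filter.IsBoundedUnder (· ≥ ·) Filter.atTop f :=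
    Filter.isBoundedUnder_of ⟨0, fun X => by simp only [hf]; positivity⟩
  have hcob : Filter.IsCoboundedUnder (· ≤ ·) Filter.atTop f :=
    hbdd'.isCoboundedUnder_le
  refine ⟨part1, ?_, ?_⟩
  · rw [hsqrt]
    exact le_antisymm (Filter.limsup_le_of_le hcob (Filter.Eventually.of_forall hub))
      (Filter.le_limsup_of_frequently_le hfr hbdd)
  · intro X₀
    refine ⟨3*X₀+2, by omega, by omega, ?_⟩
    rw [hpow, habs X₀]
    have := pow_pos hR0 (3*X₀+1)
    linarith
end

section
/- Suppose a = 0 (the case of Frobenius angle θ = π/2). Then for every positive integer X: M(X) = q^{X/2} if X ≡ 0 (mod 4); M(X) = q^{(X−1)/2} if X ≡ 1 (mod 4); M(X) = −q^{X/2} if X ≡ 2 (mod 4); M(X) = −q^{(X−1)/2} if X ≡ 3 (mod 4). Consequently |M(X)| ≤ q^{X/2} for all X ≥ 1, with equality if and only if X is even. -/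
/-!
For `a = 0` the recursion `c_{N+2} = -q c_N` splits by parity: the even-index terms vanish
from `c_2 = 0` on, while `c_{2k+1} = (-q)^{k+1} - (-q)^k`. The partial sums therefore telescope
to `M(X) = (-q)^⌊X/2⌋` for `X ≥ 1`, and the four cases are the signs of this power. Since
`q > 1`, `q^⌊X/2⌋ ≤ q^{X/2}` with equality exactly when `⌊X/2⌋ = X/2`, i.e. when `X` is even.
-/

open Real Filter

namespace Real

theorem pow_div_two_le_rpow_div_two {b : ℝ} (hb : 1 ≤ b) (n : ℕ) :
    b ^ (n / 2) ≤ b ^ ((n : ℝ) / 2) := by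
  rw [← rpow_natCast]
  exact rpow_le_rpow_of_exponent_le hb (by exact_mod_cast Nat.cast_div_le)

theorem pow_div_two_eq_rpow_div_two_iff {b : ℝ} (hb : 1 < b) (n : ℕ) :
    b ^ (n / 2) = b ^ ((n : ℝ) / 2) ↔ Even n := by
  rw [← rpow_natCast, rpow_right_inj (by positivity) hb.ne']
  obtain ⟨m, rfl | rfl⟩ := Nat.even_or_odd' n
  · simp only [Nat.mul_div_cancel_left m two_pos, even_two_mul, iff_true]
    push_cast
    ring
  · simp only [show (2 * m + 1) / 2 = m by omega, Nat.not_even_bit1, iff_false]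
    push_cast
    linarith

end Real

section TraceZero

variable (q : ℤ)

theorem mertC_zero_two_mul_add_two (k : ℕ) : mertC q 0 (2 * k + 2) = 0 := by
  induction k with
  | zero => simp [mertC]
  | succ k ih =>
    rw [show 2 * (k + 1) + 2 = (2 * k + 1) + 3 by ring, mertC, ih]
    ring

theorem mertC_zero_two_mul_add_one (k : ℕ) :
    mertC q 0 (2 * k + 1) = (-q) ^ (k + 1) - (-q) ^ k := by
  induction k with
  | zero => simp [mertC]
  | succ k ih =>
    rw [show 2 * (k + 1) + 1 = 2 * k + 3 by ring, mertC, mertC_zero_two_mul_add_two, ih]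
    ring

theorem mertM_zero_two_mul_add_one (k : ℕ) : mertM q 0 (2 * k + 1) = (-q) ^ k := by
  induction k with
  | zero => simp [mertM, mertC]
  | succ k ih =>
    rw [show 2 * (k + 1) + 1 = 2 * k + 1 + 1 + 1 by ring, mertM, Finset.sum_range_succ,
      Finset.sum_range_succ, ← mertM, ih, mertC_zero_two_mul_add_one, mertC_zero_two_mul_add_two]
    ring

theorem mertM_zero_of_pos {X : ℕ} (hX : 1 ≤ X) : mertM q 0 X = (-q) ^ (X / 2) := by
  obtain ⟨k, rfl | rfl⟩ := Nat.even_or_odd' X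
  · obtain ⟨k, rfl⟩ : ∃ j, k = j + 1 := ⟨k - 1, by omega⟩
    rw [show 2 * (k + 1) = 2 * k + 1 + 1 by ring, mertM, Finset.sum_range_succ, ← mertM,
      mertM_zero_two_mul_add_one, mertC_zero_two_mul_add_one,
      show (2 * k + 1 + 1) / 2 = k + 1 by omega]
    ring
  · rw [mertM_zero_two_mul_add_one, show (2 * k + 1) / 2 = k by omega]

end TraceZero

theorem mertens_case_trace_zero (q a : ℤ) (hq : 2 ≤ q) (ha : a = 0) :
    ∀ X : ℕ, 1 ≤ X →
      (X % 4 = 0 → mertM q a X = q ^ (X / 2)) ∧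
      (X % 4 = 1 → mertM q a X = q ^ ((X - 1) / 2)) ∧
      (X % 4 = 2 → mertM q a X = -q ^ (X / 2)) ∧
      (X % 4 = 3 → mertM q a X = -q ^ ((X - 1) / 2)) ∧
      |(mertM q a X : ℝ)| ≤ (q : ℝ) ^ ((X : ℝ) / 2) ∧
      (|(mertM q a X : ℝ)| = (q : ℝ) ^ ((X : ℝ) / 2) ↔ Even X) := by
  subst ha
  intro X hX
  have hM := mertM_zero_of_pos q hX
  have hq1 : (1 : ℝ) < q := by exact_mod_cast (by omega : (1 : ℤ) < q)
  have habs : |(mertM q 0 X : ℝ)| = (q : ℝ) ^ (X / 2) := by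
    rw [hM]
    push_cast
    rw [abs_pow, abs_neg, abs_of_pos (by linarith)]
  refine ⟨fun h => ?_, fun h => ?_, fun h => ?_, fun h => ?_, ?_, ?_⟩
  · rw [hM, Even.neg_pow (Nat.even_iff.mpr (by omega))]
  · rw [hM, Even.neg_pow (Nat.even_iff.mpr (by omega)), show (X - 1) / 2 = X / 2 by omega]
  · rw [hM, Odd.neg_pow (Nat.odd_iff.mpr (by omega))]
  · rw [hM, Odd.neg_pow (Nat.odd_iff.mpr (by omega)), show (X - 1) / 2 = X / 2 by omega]
  · exact habs ▸ Real.pow_div_two_le_rpow_div_two hq1.le X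
  · exact habs ▸ Real.pow_div_two_eq_rpow_div_two_iff hq1 X
end

section
/- Let p be a prime, m a positive integer, q = p^m, and let a be an integer with a² < 4q and p ∤ a. Then θ/π is irrational, where θ = arccos(a/(2√q)) ∈ [0, π] is the Frobenius angle associated to a and q. -/
open Real

private def tseq (a q : ℤ) : ℕ → ℤ
  | 0 => 2
  | 1 => a
  | (k+2) => a * tseq a q (k+1) - q * tseq a q k

private lemma tseq_mod (a q : ℤ) (p : ℤ) (hq : p ∣ q) :
    ∀ j, p ∣ (tseq a q (j+1) - a ^ (j+1)) := by
  have H : ∀ j, p ∣ (tseq a q (j+1) - a ^ (j+1)) ∧ p ∣ (tseq a q (j+2) - a ^ (j+2)) := by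
    intro j
    induction j with
    | zero =>
      constructor
      · simp [tseq]
      · have e : tseq a q 2 - a ^ 2 = -(tseq a q 0 * q) := by
          show a * tseq a q 1 - q * tseq a q 0 - a ^ 2 = _
          simp only [tseq]; ring
        rw [e]
        exact dvd_neg.mpr (hq.mul_left _)
    | succ k ih =>
      refine ⟨ih.2, ?_⟩
      have e : tseq a q (k+3) - a ^ (k+3) =
          a * (tseq a q (k+2) - a ^ (k+2)) - tseq a q (k+1) * q := by
        show a * tseq a q (k+2) - q * tseq a q (k+1) - a ^ (k+3) = _
        ring
      rw [e]
      exact dvd_sub (ih.2.mul_left a) (hq.mul_left _)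
  exact fun j => (H j).1

theorem frobenius_angle_irrational (p : ℕ) (hp : p.Prime) (m : ℕ) (hm : 1 ≤ m)
    (q : ℤ) (hq : q = (p : ℤ) ^ m) (a : ℤ) (ha : a ^ 2 < 4 * q)
    (hpa : ¬ (p : ℤ) ∣ a) :
    Irrational (Real.arccos ((a : ℝ) / (2 * Real.sqrt (q : ℝ))) / Real.pi) := by
  have hp0 : (0:ℤ) < (p:ℤ) := by exact_mod_cast hp.pos
  have hq0 : (0:ℤ) < q := by rw [hq]; positivity
  have hq0R : (0:ℝ) < (q:ℝ) := by exact_mod_cast hq0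
  set s : ℝ := Real.sqrt (q:ℝ) with hs_def
  have hs0 : 0 < s := Real.sqrt_pos.mpr hq0R
  have hs2 : s ^ 2 = (q:ℝ) := Real.sq_sqrt hq0R.le
  have haR : (a:ℝ) ^ 2 < 4 * (q:ℝ) := by exact_mod_cast ha
  have habs : |(a:ℝ)| < 2 * s :=
    abs_lt_of_sq_lt_sq (by nlinarith) (by positivity)
  set x : ℝ := (a:ℝ) / (2 * s) with hx_def
  have hx1 : |x| < 1 := by
    rw [hx_def, abs_div, abs_of_pos (by positivity : (0:ℝ) < 2*s), div_lt_one (by positivity)]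
    exact habs
  set θ : ℝ := Real.arccos x with hθ_def
  have hcos : Real.cos θ = x :=
    Real.cos_arccos (abs_le.mp hx1.le).1 (abs_le.mp hx1.le).2
  have ha' : (a:ℝ) = 2 * s * Real.cos θ := by
    rw [hcos, hx_def]; field_simp
  have key : ∀ j : ℕ, ((tseq a q j : ℤ) : ℝ) = 2 * s ^ j * Real.cos (j * θ) := by
    have H : ∀ j : ℕ, ((tseq a q j : ℤ) : ℝ) = 2 * s ^ j * Real.cos (j * θ) ∧
        ((tseq a q (j+1) : ℤ) : ℝ) = 2 * s ^ (j+1) * Real.cos (((j:ℝ)+1) * θ) := by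
      intro j
      induction j with
      | zero => constructor <;> simp [tseq, ha']
      | succ k ih =>
        constructor
        · push_cast
          exact ih.2
        · have e0 : ((tseq a q (k+2) : ℤ) : ℝ) =
              (a:ℝ) * ((tseq a q (k+1) : ℤ) : ℝ) - (q:ℝ) * ((tseq a q k : ℤ) : ℝ) := by
            show ((a * tseq a q (k+1) - q * tseq a q k : ℤ) : ℝ) = _
            push_cast; ring
          have e3 : Real.cos (((k:ℝ)+1+1) * θ) =
              Real.cos (((k:ℝ)+1) * θ) * Real.cos θ - Real.sin (((k:ℝ)+1) * θ) * Real.sin θ := by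
            rw [show ((k:ℝ)+1+1) * θ = (((k:ℝ)+1) * θ) + θ by ring, Real.cos_add]
          have e4 : Real.cos ((k:ℝ) * θ) =
              Real.cos (((k:ℝ)+1) * θ) * Real.cos θ + Real.sin (((k:ℝ)+1) * θ) * Real.sin θ := by
            rw [show (k:ℝ) * θ = (((k:ℝ)+1) * θ) - θ by ring, Real.cos_sub]
          rw [e0, ih.1, ih.2]
          push_cast
          rw [e3, e4, ha', ← hs2]
          ring
    exact fun j => (H j).1
  rintro ⟨r, hr⟩
  have hπ : (0:ℝ) < Real.pi := Real.pi_pos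
  have hθ : θ = (r:ℝ) * Real.pi := by
    field_simp at hr
    linarith [hr]
  set N : ℕ := 2 * r.den with hN_def
  have hdr : ((r.den : ℚ) * r : ℚ) = (r.num : ℚ) := Rat.den_mul_eq_num r
  have hdrR : (r.den : ℝ) * (r : ℝ) = (r.num : ℝ) := by
    exact_mod_cast congrArg (Rat.cast : ℚ → ℝ) hdr
  have hNθ : (N:ℝ) * θ = (r.num : ℝ) * (2 * Real.pi) := by
    rw [hθ, hN_def]
    push_cast
    nlinarith [hdrR]
  have hcosN : Real.cos ((N:ℝ) * θ) = 1 := by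
    rw [hNθ]; exact Real.cos_int_mul_two_pi r.num
  have hsN : s ^ N = (q:ℝ) ^ r.den := by
    rw [hN_def, pow_mul, hs2]
  have htN : ((tseq a q N : ℤ) : ℝ) = ((2 * q ^ r.den : ℤ) : ℝ) := by
    rw [key N, hcosN, hsN]; push_cast; ring
  have htNZ : tseq a q N = 2 * q ^ r.den := by exact_mod_cast htN
  have hpq : (p:ℤ) ∣ q := by
    rw [hq]; exact dvd_pow_self _ (by omega)
  have hNe : N - 1 + 1 = N := by
    have := r.den_pos; omega
  have h1 : (p:ℤ) ∣ tseq a q N - a ^ N := by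
    have := tseq_mod a q (p:ℤ) hpq (N-1)
    rwa [hNe] at this
  have h2 : (p:ℤ) ∣ tseq a q N := by
    rw [htNZ]
    exact Dvd.dvd.mul_left (dvd_pow hpq r.den_pos.ne') 2
  have hdvd : (p:ℤ) ∣ a ^ N := by
    have := dvd_sub h2 h1
    simpa using this
  exact hpa ((Nat.prime_iff_prime_int.mp hp).dvd_of_dvd_pow hdvd)
end
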